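/- arXiv:1605.02480 — 2 statements merged into one kernel-verified Lean document; each statement's English description precedes it below -/
import Mathlib

section
/- Let a, b > 0 and 0 < ν ≤ 1/2. Set h = b/a, r = min{2ν, 1-2ν}, r₁ = min{2r, 1-2r}, and K(t) = (1+t)²/(4t). Then (1-ν)a + νb ≥ ν(√a − √b)² + r((ab)^(1/4) − √a)² + K(h^(1/4))^{r₁} · a^(1-ν) b^ν. -/
open Real Finset

noncomputable def Kc (t : ℝ) : ℝ := (1 + t)^2 / (4 * t)

lemma Kc_pow_mul (t w z : ℝ) (ht : 0 < t) :
    Kc t ^ w * t ^ z = ((1+t)/2) ^ (2*w) * t ^ (z - w) := by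
  have hs : (0:ℝ) < (1+t)/2 := by linarith
  have h2 : ((1+t)/2) ^ (2:ℝ) = ((1+t)/2)^2 := by
    rw [show (2:ℝ) = ((2:ℕ):ℝ) by norm_num, Real.rpow_natCast]
  have hKc : Kc t = ((1+t)/2) ^ (2:ℝ) / t := by rw [h2]; unfold Kc; ring
  rw [hKc, Real.div_rpow (by positivity) ht.le, ← Real.rpow_mul hs.le,
    Real.rpow_sub ht]
  ring

lemma lemA (t e : ℝ) (ht : 0 < t) (he0 : 0 ≤ e) (he1 : e ≤ 1) :
    Kc t ^ (min e (1-e)) * t ^ e ≤ 1 - e + e * t := by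
  have hs : (0:ℝ) < (1+t)/2 := by linarith
  rcases le_total e (1/2) with hc | hc
  · rw [min_eq_left (by linarith), Kc_pow_mul t e e ht, sub_self, Real.rpow_zero, mul_one]
    have := Real.geom_mean_le_arith_mean2_weighted
      (by linarith : (0:ℝ) ≤ 1 - 2*e) (by linarith : (0:ℝ) ≤ 2*e)
      (by norm_num : (0:ℝ) ≤ 1) hs.le (by ring)
    rw [Real.one_rpow, one_mul] at this
    calc ((1+t)/2) ^ (2*e) ≤ (1-2*e)*1 + 2*e*((1+t)/2) := this
    _ = 1 - e + e*t := by ring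
  · rw [min_eq_right (by linarith), Kc_pow_mul t (1-e) e ht]
    have := Real.geom_mean_le_arith_mean2_weighted
      (by linarith : (0:ℝ) ≤ 2*(1-e)) (by linarith : (0:ℝ) ≤ 2*e-1)
      hs.le ht.le (by ring)
    calc ((1+t)/2) ^ (2*(1-e)) * t ^ (e-(1-e))
        = ((1+t)/2) ^ (2*(1-e)) * t ^ (2*e-1) := by ring_nf
    _ ≤ 2*(1-e)*((1+t)/2) + (2*e-1)*t := this
    _ = 1 - e + e*t := by ring

lemma Kc_inv (t : ℝ) (ht : 0 < t) : Kc (1/t) = Kc t := by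
  unfold Kc; field_simp; ring

lemma main_ineq (t ν : ℝ) (ht : 0 < t) (hν1 : 0 < ν) (hν2 : ν ≤ 1/2) :
    ν*(1-t^2)^2 + (min (2*ν) (1-2*ν))*(t-1)^2
      + Kc t ^ (min (2*(min (2*ν) (1-2*ν))) (1-2*(min (2*ν) (1-2*ν)))) * t^(4*ν)
      ≤ 1 - ν + ν*t^4 := by
  rcases le_total ν (1/4) with hc | hc
  · rw [min_eq_left (by linarith : 2*ν ≤ 1-2*ν)]
    have key := lemA t (4*ν) ht (by linarith) (by linarith)
    have hmin : min (2*(2*ν)) (1-2*(2*ν)) = min (4*ν) (1-4*ν) := by norm_num; ring_nf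
    rw [hmin]
    nlinarith [key]
  · rw [min_eq_right (by linarith : 1-2*ν ≤ 2*ν)]
    have hti : (0:ℝ) < 1/t := by positivity
    have key := lemA (1/t) (2-4*ν) hti (by linarith) (by linarith)
    rw [Kc_inv t ht] at key
    have hmin : min (2*(1-2*ν)) (1-2*(1-2*ν)) = min (2-4*ν) (1-(2-4*ν)) := by ring_nf
    rw [hmin]
    -- key : Kc t ^ min (2-4ν) (1-(2-4ν)) * (1/t)^(2-4ν) ≤ 1-(2-4ν)+(2-4ν)*(1/t)
    have hpow : (1/t) ^ (2-4*ν) = (t ^ (2-4*ν))⁻¹ := by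
      rw [one_div, Real.inv_rpow ht.le]
    rw [hpow] at key
    have htp : (0:ℝ) < t ^ (2-4*ν) := Real.rpow_pos_of_pos ht _
    have key2 : Kc t ^ (min (2-4*ν) (1-(2-4*ν))) ≤ (4*ν-1+(2-4*ν)*(1/t)) * t ^ (2-4*ν) := by
      rw [← div_le_iff₀ htp]
      calc Kc t ^ (min (2-4*ν) (1-(2-4*ν))) / t ^ (2-4*ν)
          = Kc t ^ (min (2-4*ν) (1-(2-4*ν))) * (t ^ (2-4*ν))⁻¹ := div_eq_mul_inv _ _
        _ ≤ 1-(2-4*ν)+(2-4*ν)*(1/t) := key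
        _ = 4*ν-1+(2-4*ν)*(1/t) := by ring
    -- multiply by t^(4ν-2) * t^2 relation: t^(4ν) = t^2 / t^(2-4ν)
    have hts : t ^ (4*ν) = t^2 / t ^ (2-4*ν) := by
      rw [eq_div_iff htp.ne', ← Real.rpow_add ht, show 4*ν+(2-4*ν) = (2:ℝ) by ring,
        show (2:ℝ) = ((2:ℕ):ℝ) by norm_num, Real.rpow_natCast]
    have key3 : Kc t ^ (min (2-4*ν) (1-(2-4*ν))) * t ^ (4*ν) ≤ (4*ν-1)*t^2 + (2-4*ν)*t := by
      rw [hts]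
      have := mul_le_mul_of_nonneg_right key2 (le_of_lt (by positivity : (0:ℝ) < t^2 / t ^ (2-4*ν)))
      calc Kc t ^ (min (2-4*ν) (1-(2-4*ν))) * (t^2 / t ^ (2-4*ν))
          ≤ (4*ν-1+(2-4*ν)*(1/t)) * t ^ (2-4*ν) * (t^2 / t ^ (2-4*ν)) := this
        _ = (4*ν-1+(2-4*ν)*(1/t)) * t^2 := by field_simp
        _ = (4*ν-1)*t^2 + (2-4*ν)*t := by field_simp
    nlinarith [key3]

noncomputable def rseq (ν : ℝ) : ℕ → ℝ
  | 0 => min ν (1 - ν)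
  | k + 1 => min (2 * rseq ν k) (1 - 2 * rseq ν k)

noncomputable def mfl (ν : ℝ) (k : ℕ) : ℝ := ⌊(2:ℝ)^k * ν⌋

theorem stmt5 (a b ν : ℝ) (ha : 0 < a) (hb : 0 < b) (hν1 : 0 < ν) (hν2 : ν ≤ 1/2)
    (h : ℝ) (hh : h = b / a) (r r₁ : ℝ) (hr : r = min (2*ν) (1 - 2*ν)) (hr₁ : r₁ = min (2*r) (1 - 2*r)) :
    ν * (Real.sqrt a - Real.sqrt b)^2 + r * ((a*b) ^ ((1:ℝ)/4) - Real.sqrt a)^2 + Kc (h ^ ((1:ℝ)/4)) ^ r₁ * (a ^ (1 - ν) * b ^ ν) ≤ (1 - ν) * a + ν * b := by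
  set u : ℝ := a ^ ((1:ℝ)/4) with hu_def
  set t : ℝ := (b/a) ^ ((1:ℝ)/4) with ht_def
  have hba : (0:ℝ) < b/a := div_pos hb ha
  have hu : 0 < u := Real.rpow_pos_of_pos ha _
  have ht : 0 < t := Real.rpow_pos_of_pos hba _
  have hu4 : u^4 = a := by
    rw [hu_def, ← Real.rpow_natCast (a ^ ((1:ℝ)/4)) 4, ← Real.rpow_mul ha.le]
    norm_num
  have ht4 : t^4 = b/a := by
    rw [ht_def, ← Real.rpow_natCast ((b/a) ^ ((1:ℝ)/4)) 4, ← Real.rpow_mul hba.le]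
    norm_num
  have hb4 : b = u^4 * t^4 := by rw [hu4, ht4]; field_simp
  have hsa : Real.sqrt a = u^2 := by
    rw [← hu4, show u^4 = (u^2)^2 by ring, Real.sqrt_sq (by positivity)]
  have hsb : Real.sqrt b = u^2 * t^2 := by
    rw [hb4, show u^4*t^4 = (u^2*t^2)^2 by ring, Real.sqrt_sq (by positivity)]
  have hab : (a*b) ^ ((1:ℝ)/4) = u^2 * t := by
    rw [show a*b = (u^2*t)^(4:ℕ) by rw [← hu4, hb4]; ring,
      ← Real.rpow_natCast ((u^2*t)) 4, ← Real.rpow_mul (by positivity)]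
    norm_num
  have hht : h ^ ((1:ℝ)/4) = t := by rw [hh]
  have habν : a ^ (1-ν) * b ^ ν = u^4 * t^(4*ν) := by
    have h1 : a ^ (1-ν) = a / a ^ ν := by
      rw [eq_div_iff (Real.rpow_pos_of_pos ha ν).ne', ← Real.rpow_add ha,
        show 1-ν+ν = (1:ℝ) by ring, Real.rpow_one]
    have h2 : b ^ ν / a ^ ν = (b/a) ^ ν := (Real.div_rpow hb.le ha.le ν).symm
    have h3 : (b/a) ^ ν = t ^ (4*ν) := by
      rw [ht_def, ← Real.rpow_mul hba.le]
      congr 1; ring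
    rw [h1, hu4, ← h3, ← h2]; ring
  have main := main_ineq t ν ht hν1 hν2
  rw [← hr, ← hr₁] at main
  have hmul := mul_le_mul_of_nonneg_left main (by positivity : (0:ℝ) ≤ u^4)
  calc ν * (Real.sqrt a - Real.sqrt b)^2 + r * ((a*b) ^ ((1:ℝ)/4) - Real.sqrt a)^2
        + Kc (h ^ ((1:ℝ)/4)) ^ r₁ * (a ^ (1 - ν) * b ^ ν)
      = u^4 * (ν*(1-t^2)^2 + r*(t-1)^2 + Kc t ^ r₁ * t^(4*ν)) := by
        rw [hsa, hsb, hab, hht, habν]; ring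
    _ ≤ u^4 * (1 - ν + ν*t^4) := hmul
    _ = (1-ν)*a + ν*b := by rw [hb4, ← hu4]; ring
end

section
/- Let a, b > 0, ν ∈ (0,1), n ≥ 1, h = b/a, K(t) = (1+t)²/(4t), m_k = ⌊2^k ν⌋, r₀ = min{ν, 1-ν}, r_k = min{2 r_{k-1}, 1 − 2 r_{k-1}}, R_n = 1 − r_n. Then K(h^{1/2^{n-1}})^{r_n} · (a^(1-ν) b^ν)² ≤ ((1-ν)a + νb)² − r₀²(a−b)² − Σ_{k=1}^{n-1} r_k · [ a^{1 − m_k/2^k} b^{m_k/2^k} − a^{1 − (m_k+1)/2^k} b^{(m_k+1)/2^k} ]² ≤ K(h^{1/2^{n-1}})^{R_n} · (a^(1-ν) b^ν)². -/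
/-!
Write `a #_s b = a ^ (1 - s) * b ^ s`. With `d = ⌊2μ⌋` and `μ' = 2μ - d`, the pair
`a' = a #_{d/2} b`, `b' = a #_{(d+1)/2} b` is the geometric half of `[a, b]` containing
`a #_μ b`, and because `a' ^ 2 = a b` or `b' ^ 2 = a b`,
`(1 - μ) a² + μ b² - r₀ (a - b)² = (1 - μ') a'² + μ' b'²`.
Under `(a, b, μ) ↦ (a', b', μ')` the weights `r_k` and the dyadic gaps shift by one index, the
mean `a #_μ b` is unchanged and `(b' / a')² = b / a`, so `n` halvings reduce the claim to the
Kantorovich refinement `K(t) ^ r₀ t ^ μ ≤ 1 - μ + μ t ≤ K(t) ^ (1 - r₀) t ^ μ` of Young's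
inequality. Its lower half is weighted AM-GM between `(1 + t) / 2` and `1` or `t`; its upper
half is the lower half at `1 / t` combined with `(1 - μ + μ t) (1 - μ + μ / t) ≤ K(t)`.
Finally `((1 - ν) a + ν b)² - r₀² (a - b)² = (1 - ν) a² + ν b² - r₀ (a - b)²`
since `r₀ (1 - r₀) = ν (1 - ν)`.
-/

open Real Finset

lemma Kc_pos {t : ℝ} (ht : 0 < t) : 0 < Kc t := by
  unfold Kc; positivity

lemma Kc_inv_s10 (t : ℝ) : Kc t⁻¹ = Kc t := by
  unfold Kc
  rcases eq_or_ne t 0 with rfl | ht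
  · simp
  · field_simp
    ring

lemma Kc_rpow_mul_rpow {t : ℝ} (ht : 0 < t) (s μ : ℝ) :
    Kc t ^ s * t ^ μ = t ^ (μ - s) * ((1 + t) / 2) ^ (2 * s) := by
  have hK : Kc t = ((1 + t) / 2) ^ 2 / t := by
    unfold Kc; field_simp; ring
  rw [hK, div_rpow (by positivity) ht.le, ← rpow_natCast_mul (by positivity), rpow_sub ht]
  push_cast
  field_simp

lemma Kc_rpow_min_mul_rpow_le {t μ : ℝ} (ht : 0 < t) (hμ0 : 0 ≤ μ) (hμ1 : μ ≤ 1) :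
    Kc t ^ min μ (1 - μ) * t ^ μ ≤ 1 - μ + μ * t := by
  rw [Kc_rpow_mul_rpow ht]
  rcases le_total μ (1 / 2) with hμ | hμ
  · rw [min_eq_left (by linarith), sub_self, rpow_zero, one_mul]
    have := geom_mean_le_arith_mean2_weighted (p₁ := 1) (p₂ := (1 + t) / 2)
      (by linarith : 0 ≤ 1 - 2 * μ) (by linarith : 0 ≤ 2 * μ) zero_le_one (by positivity)
      (by ring)
    rw [one_rpow, one_mul] at this
    linarith
  · rw [min_eq_right (by linarith), show μ - (1 - μ) = 2 * μ - 1 by ring]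
    have := geom_mean_le_arith_mean2_weighted (p₁ := t) (p₂ := (1 + t) / 2)
      (by linarith : 0 ≤ 2 * μ - 1) (by linarith : 0 ≤ 2 * (1 - μ)) ht.le (by positivity)
      (by ring)
    linarith

lemma mean_mul_mean_inv_le_Kc {t : ℝ} (ht : 0 < t) (μ : ℝ) :
    (1 - μ + μ * t) * (1 - μ + μ * t⁻¹) ≤ Kc t := by
  unfold Kc
  rw [le_div_iff₀ (by positivity)]
  have key : (1 - μ + μ * t) * (1 - μ + μ * t⁻¹) * (4 * t)
      = (1 + t) ^ 2 - ((1 - 2 * μ) * (1 - t)) ^ 2 := by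
    field_simp
    ring
  linarith [sq_nonneg ((1 - 2 * μ) * (1 - t))]

lemma le_Kc_rpow_one_sub_min_mul_rpow {t μ : ℝ} (ht : 0 < t) (hμ0 : 0 ≤ μ)
    (hμ1 : μ ≤ 1) :
    1 - μ + μ * t ≤ Kc t ^ (1 - min μ (1 - μ)) * t ^ μ := by
  have hlow := Kc_rpow_min_mul_rpow_le (inv_pos.2 ht) hμ0 hμ1
  rw [Kc_inv_s10] at hlow
  have hK := Kc_pos ht
  have hlow_pos : 0 < Kc t ^ min μ (1 - μ) * t⁻¹ ^ μ := by positivity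
  calc 1 - μ + μ * t ≤ Kc t / (1 - μ + μ * t⁻¹) :=
        (le_div_iff₀ (hlow_pos.trans_le hlow)).2 (mean_mul_mean_inv_le_Kc ht μ)
    _ ≤ Kc t / (Kc t ^ min μ (1 - μ) * t⁻¹ ^ μ) :=
        div_le_div_of_nonneg_left hK.le hlow_pos hlow
    _ = Kc t ^ (1 - min μ (1 - μ)) * t ^ μ := by
        rw [rpow_sub hK, rpow_one, inv_rpow ht.le]
        field_simp

noncomputable def weightedGeomMean (a b s : ℝ) : ℝ := a ^ (1 - s) * b ^ s

section WeightedGeomMean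

variable {a b : ℝ}

lemma weightedGeomMean_pos (ha : 0 < a) (hb : 0 < b) (s : ℝ) : 0 < weightedGeomMean a b s := by
  unfold weightedGeomMean; positivity

@[simp] lemma weightedGeomMean_zero : weightedGeomMean a b 0 = a := by
  simp [weightedGeomMean]

@[simp] lemma weightedGeomMean_one : weightedGeomMean a b 1 = b := by
  simp [weightedGeomMean]

lemma weightedGeomMean_eq_exp (ha : 0 < a) (hb : 0 < b) (s : ℝ) :
    weightedGeomMean a b s = exp ((1 - s) * log a + s * log b) := by
  rw [weightedGeomMean, rpow_def_of_pos ha, rpow_def_of_pos hb, ← exp_add]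
  ring_nf

lemma weightedGeomMean_weightedGeomMean (ha : 0 < a) (hb : 0 < b) (p q s : ℝ) :
    weightedGeomMean (weightedGeomMean a b p) (weightedGeomMean a b q) s =
      weightedGeomMean a b ((1 - s) * p + s * q) := by
  rw [weightedGeomMean_eq_exp (weightedGeomMean_pos ha hb p) (weightedGeomMean_pos ha hb q),
    weightedGeomMean_eq_exp ha hb p, weightedGeomMean_eq_exp ha hb q, log_exp, log_exp,
    weightedGeomMean_eq_exp ha hb]
  ring_nf

lemma weightedGeomMean_div_weightedGeomMean (ha : 0 < a) (hb : 0 < b) (s t : ℝ) :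
    weightedGeomMean a b t / weightedGeomMean a b s = (b / a) ^ (t - s) := by
  rw [weightedGeomMean_eq_exp ha hb, weightedGeomMean_eq_exp ha hb, ← exp_sub,
    rpow_def_of_pos (div_pos hb ha), log_div hb.ne' ha.ne']
  ring_nf

lemma weightedGeomMean_half_sq (ha : 0 < a) (hb : 0 < b) :
    weightedGeomMean a b (1 / 2) ^ 2 = a * b := by
  rw [weightedGeomMean_eq_exp ha hb, sq, ← exp_add, ← exp_log (mul_pos ha hb),
    log_mul ha.ne' hb.ne']
  ring_nf

lemma weightedGeomMean_sq (ha : 0 < a) (hb : 0 < b) (s : ℝ) :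
    weightedGeomMean a b s ^ 2 = a ^ 2 * ((b / a) ^ 2) ^ s := by
  have h := weightedGeomMean_div_weightedGeomMean ha hb 0 s
  rw [weightedGeomMean_zero, sub_zero, div_eq_iff ha.ne'] at h
  rw [h, mul_pow, rpow_pow_comm (div_pos hb ha).le]
  ring

end WeightedGeomMean

lemma mfl_zero {μ : ℝ} (hμ : μ ∈ Set.Ico 0 1) : mfl μ 0 = 0 := by
  simp [mfl, Int.floor_eq_zero_iff.2 hμ]

lemma mfl_one_cases {μ : ℝ} (hμ : μ ∈ Set.Ico 0 1) :
    mfl μ 1 = 0 ∧ μ < 1 / 2 ∨ mfl μ 1 = 1 ∧ 1 / 2 ≤ μ := by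
  obtain ⟨hμ0, hμ1⟩ := hμ
  rw [mfl, pow_one]
  rcases lt_or_ge μ (1 / 2) with h | h
  · refine Or.inl ⟨?_, h⟩
    exact_mod_cast Int.floor_eq_iff.2 ⟨by push_cast; linarith, by push_cast; linarith⟩
  · refine Or.inr ⟨?_, h⟩
    exact_mod_cast Int.floor_eq_iff.2 ⟨by push_cast; linarith, by push_cast; linarith⟩

lemma two_mul_sub_mfl_one_mem_Ico (μ : ℝ) : 2 * μ - mfl μ 1 ∈ Set.Ico 0 1 := by
  have h0 := Int.floor_le (2 * μ)
  have h1 := Int.lt_floor_add_one (2 * μ)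
  simp only [mfl, pow_one, Set.mem_Ico]
  constructor <;> linarith

lemma mfl_two_mul_sub_mfl_one (μ : ℝ) (k : ℕ) :
    mfl (2 * μ - mfl μ 1) k = mfl μ (k + 1) - 2 ^ k * mfl μ 1 := by
  unfold mfl
  have : (2:ℝ) ^ k * (2 * μ - ⌊(2:ℝ) ^ 1 * μ⌋) =
      (2:ℝ) ^ (k + 1) * μ - ((2 ^ k * ⌊(2:ℝ) ^ 1 * μ⌋ : ℤ) : ℝ) := by
    push_cast; ring
  rw [this, Int.floor_sub_intCast]
  push_cast
  ring

lemma rseq_eq_rseq_succ {μ μ' : ℝ} (h : rseq μ' 0 = rseq μ 1) :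
    ∀ k, rseq μ' k = rseq μ (k + 1)
  | 0 => h
  | k + 1 => by rw [rseq, rseq, rseq_eq_rseq_succ h k]

lemma rseq_two_mul_sub_mfl_one {μ : ℝ} (hμ : μ ∈ Set.Ico 0 1) (k : ℕ) :
    rseq (2 * μ - mfl μ 1) k = rseq μ (k + 1) := by
  refine rseq_eq_rseq_succ ?_ k
  simp only [rseq]
  rcases mfl_one_cases hμ with ⟨hd, hμ⟩ | ⟨hd, hμ⟩
  · rw [hd, min_eq_left (by linarith : μ ≤ 1 - μ)]
    ring_nf
  · rw [hd, min_eq_right (by linarith : 1 - μ ≤ μ), min_comm]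
    ring_nf

/-- `mfl μ k / 2 ^ k ≤ μ < (mfl μ k + 1) / 2 ^ k`: the gap is taken across the dyadic interval
of length `2⁻ᵏ` containing `μ`. -/
noncomputable def dyadicGap (a b μ : ℝ) (k : ℕ) : ℝ :=
  weightedGeomMean a b (mfl μ k / 2 ^ k) - weightedGeomMean a b ((mfl μ k + 1) / 2 ^ k)

noncomputable def refinedArithMean (a b μ : ℝ) (N : ℕ) : ℝ :=
  (1 - μ) * a ^ 2 + μ * b ^ 2 - ∑ k ∈ range N, rseq μ k * dyadicGap a b μ k ^ 2

section Halving

variable {a b : ℝ}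

lemma dyadicGap_zero {μ : ℝ} (hμ : μ ∈ Set.Ico 0 1) : dyadicGap a b μ 0 = a - b := by
  simp [dyadicGap, mfl_zero hμ]

lemma dyadicGap_halve (ha : 0 < a) (hb : 0 < b) (μ : ℝ) (k : ℕ) :
    dyadicGap (weightedGeomMean a b (mfl μ 1 / 2))
      (weightedGeomMean a b ((mfl μ 1 + 1) / 2)) (2 * μ - mfl μ 1) k =
        dyadicGap a b μ (k + 1) := by
  unfold dyadicGap
  rw [weightedGeomMean_weightedGeomMean ha hb, weightedGeomMean_weightedGeomMean ha hb,
    mfl_two_mul_sub_mfl_one]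
  congr 2 <;> field_simp <;> ring

lemma weightedGeomMean_halve (ha : 0 < a) (hb : 0 < b) (μ : ℝ) :
    weightedGeomMean (weightedGeomMean a b (mfl μ 1 / 2))
      (weightedGeomMean a b ((mfl μ 1 + 1) / 2)) (2 * μ - mfl μ 1) =
        weightedGeomMean a b μ := by
  rw [weightedGeomMean_weightedGeomMean ha hb]
  ring_nf

lemma weightedGeomMean_halve_div_rpow (ha : 0 < a) (hb : 0 < b) (μ : ℝ) (N : ℕ) :
    (weightedGeomMean a b ((mfl μ 1 + 1) / 2) / weightedGeomMean a b (mfl μ 1 / 2)) ^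
      ((2:ℝ) / 2 ^ N) = (b / a) ^ ((2:ℝ) / 2 ^ (N + 1)) := by
  rw [weightedGeomMean_div_weightedGeomMean ha hb, ← rpow_mul (div_pos hb ha).le]
  congr 1
  field_simp
  ring

lemma sq_arithMean_halve (ha : 0 < a) (hb : 0 < b) {μ : ℝ} (hμ : μ ∈ Set.Ico 0 1) :
    (1 - (2 * μ - mfl μ 1)) * weightedGeomMean a b (mfl μ 1 / 2) ^ 2 +
        (2 * μ - mfl μ 1) * weightedGeomMean a b ((mfl μ 1 + 1) / 2) ^ 2 =
      (1 - μ) * a ^ 2 + μ * b ^ 2 - rseq μ 0 * dyadicGap a b μ 0 ^ 2 := by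
  have hc := weightedGeomMean_half_sq ha hb
  rw [dyadicGap_zero hμ]
  simp only [rseq]
  rcases mfl_one_cases hμ with ⟨hd, hμ⟩ | ⟨hd, hμ⟩
  · rw [hd, min_eq_left (by linarith : μ ≤ 1 - μ), zero_div, zero_add, weightedGeomMean_zero]
    linear_combination 2 * μ * hc
  · rw [hd, min_eq_right (by linarith : 1 - μ ≤ μ), show ((1:ℝ) + 1) / 2 = 1 by norm_num,
      weightedGeomMean_one]
    linear_combination 2 * (1 - μ) * hc

lemma refinedArithMean_halve (ha : 0 < a) (hb : 0 < b) {μ : ℝ} (hμ : μ ∈ Set.Ico 0 1)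
    (N : ℕ) :
    refinedArithMean (weightedGeomMean a b (mfl μ 1 / 2))
      (weightedGeomMean a b ((mfl μ 1 + 1) / 2)) (2 * μ - mfl μ 1) N =
        refinedArithMean a b μ (N + 1) := by
  unfold refinedArithMean
  simp only [dyadicGap_halve ha hb, rseq_two_mul_sub_mfl_one hμ, sq_arithMean_halve ha hb hμ,
    sum_range_succ' _ N]
  ring

end Halving

lemma sq_arithMean_mem_Icc {a b μ : ℝ} (ha : 0 < a) (hb : 0 < b) (hμ0 : 0 ≤ μ)
    (hμ1 : μ ≤ 1) :
    (1 - μ) * a ^ 2 + μ * b ^ 2 ∈ Set.Icc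
      (Kc ((b / a) ^ 2) ^ min μ (1 - μ) * weightedGeomMean a b μ ^ 2)
      (Kc ((b / a) ^ 2) ^ (1 - min μ (1 - μ)) * weightedGeomMean a b μ ^ 2) := by
  have ht : 0 < (b / a) ^ 2 := by positivity
  have hmean : (1 - μ) * a ^ 2 + μ * b ^ 2 = a ^ 2 * (1 - μ + μ * (b / a) ^ 2) := by
    field_simp
  rw [hmean, weightedGeomMean_sq ha hb, mul_left_comm, mul_left_comm (Kc _ ^ (1 - _))]
  exact ⟨mul_le_mul_of_nonneg_left (Kc_rpow_min_mul_rpow_le ht hμ0 hμ1) (by positivity),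
    mul_le_mul_of_nonneg_left (le_Kc_rpow_one_sub_min_mul_rpow ht hμ0 hμ1) (by positivity)⟩

theorem refinedArithMean_mem_Icc (N : ℕ) {a b μ : ℝ} (ha : 0 < a) (hb : 0 < b)
    (hμ : μ ∈ Set.Ico 0 1) :
    refinedArithMean a b μ N ∈ Set.Icc
      (Kc ((b / a) ^ ((2:ℝ) / 2 ^ N)) ^ rseq μ N * weightedGeomMean a b μ ^ 2)
      (Kc ((b / a) ^ ((2:ℝ) / 2 ^ N)) ^ (1 - rseq μ N) * weightedGeomMean a b μ ^ 2) := by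
  induction N generalizing a b μ with
  | zero =>
    simpa [refinedArithMean, rseq, rpow_two] using sq_arithMean_mem_Icc ha hb hμ.1 hμ.2.le
  | succ N ih =>
    have h := ih (weightedGeomMean_pos ha hb (mfl μ 1 / 2))
      (weightedGeomMean_pos ha hb ((mfl μ 1 + 1) / 2)) (two_mul_sub_mfl_one_mem_Ico μ)
    rwa [refinedArithMean_halve ha hb hμ, weightedGeomMean_halve_div_rpow ha hb,
      rseq_two_mul_sub_mfl_one hμ, weightedGeomMean_halve ha hb] at h

lemma min_mul_one_sub_min (μ : ℝ) : min μ (1 - μ) * (1 - min μ (1 - μ)) = μ * (1 - μ) := by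
  rcases min_choice μ (1 - μ) with h | h
  · rw [h]
  · rw [h]; ring

lemma refinedArithMean_succ {a b μ : ℝ} (hμ : μ ∈ Set.Ico 0 1) (N : ℕ) :
    refinedArithMean a b μ (N + 1) =
      ((1 - μ) * a + μ * b) ^ 2 - (min μ (1 - μ)) ^ 2 * (a - b) ^ 2 -
        ∑ k ∈ Icc 1 N, rseq μ k * dyadicGap a b μ k ^ 2 := by
  rw [refinedArithMean, range_eq_Ico, sum_eq_sum_Ico_succ_bot (by omega : 0 < N + 1),
    zero_add, Ico_add_one_right_eq_Icc, dyadicGap_zero hμ]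
  simp only [rseq]
  linear_combination -(a - b) ^ 2 * min_mul_one_sub_min μ

theorem stmt10 (a b ν : ℝ) (ha : 0 < a) (hb : 0 < b) (hν : ν ∈ Set.Ioo (0:ℝ) 1)
    (n : ℕ) (hn : 1 ≤ n) (h : ℝ) (hh : h = b / a) :
    Kc (h ^ ((1:ℝ)/2^(n-1))) ^ rseq ν n * (a ^ (1 - ν) * b ^ ν)^2 ≤
      ((1 - ν) * a + ν * b)^2 - (min ν (1 - ν))^2 * (a - b)^2 - (∑ k ∈ Finset.Icc 1 (n-1), rseq ν k * (a ^ (1 - mfl ν k / 2^k) * b ^ (mfl ν k / 2^k) - a ^ (1 - (mfl ν k + 1) / 2^k) * b ^ ((mfl ν k + 1) / 2^k))^2) ∧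
    ((1 - ν) * a + ν * b)^2 - (min ν (1 - ν))^2 * (a - b)^2 - (∑ k ∈ Finset.Icc 1 (n-1), rseq ν k * (a ^ (1 - mfl ν k / 2^k) * b ^ (mfl ν k / 2^k) - a ^ (1 - (mfl ν k + 1) / 2^k) * b ^ ((mfl ν k + 1) / 2^k))^2) ≤
      Kc (h ^ ((1:ℝ)/2^(n-1))) ^ (1 - rseq ν n) * (a ^ (1 - ν) * b ^ ν)^2 := by
  obtain ⟨m, rfl⟩ : ∃ m, n = m + 1 := ⟨n - 1, by omega⟩
  have hν' : ν ∈ Set.Ico 0 1 := ⟨hν.1.le, hν.2⟩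
  have hexp : (b / a) ^ ((2:ℝ) / 2 ^ (m + 1)) = h ^ ((1:ℝ) / 2 ^ m) := by
    rw [hh, pow_succ]
    ring_nf
  have key := refinedArithMean_mem_Icc (m + 1) ha hb hν'
  rw [refinedArithMean_succ hν', hexp] at key
  -- the summands of the statement are `rseq ν k * dyadicGap a b ν k ^ 2` unfolded
  exact key
end
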